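/- Let H = (H0, H1) be a consistent partial condition over a nonempty finite set T in which every member of H0 ∪ H1 is nonempty and T ∉ H0 ∪ H1. Define H^p = (H0 ∪ {T}, H1) and H^n = (H0, H1 ∪ {T}). Then: (i) if no parity condition is consistent with H^p and no parity condition is consistent with H^n, then no parity condition is consistent with H; (ii) if κ^p is a parity condition consistent with H^p using the minimal possible number of distinct priorities among parity conditions consistent with H^p, and κ^n is likewise minimal for H^n, then the numbers of distinct priorities used by κ^p and κ^n (the cardinalities of their images on T) differ by at most 1, and the one using fewer distinct priorities is consistent with H and uses the minimal possible number of distinct priorities among all parity conditions consistent with H. -/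
import Mathlib


/-- A parity condition `κ` is consistent with the partial condition
`(H0, H1)`: every `X ∈ H0` satisfies `κ` (its minimal priority is even) and no
`X ∈ H1` does. -/
def ParityConsistentWith {T : Type*} (H0 H1 : Set (Set T)) (κ : T → ℕ) : Prop :=
  (∀ X ∈ H0, Even (sInf (κ '' X))) ∧ ∀ X ∈ H1, ¬Even (sInf (κ '' X))

/-- The number of distinct priorities used by a parity condition `κ : T → ℕ`,
i.e. the cardinality of its image. -/
noncomputable def numPriorities {T : Type*} (κ : T → ℕ) : ℕ :=
  (Set.range κ).ncard

private lemma sInf_image_add2 {T : Type*} (f : T → ℕ) (X : Set T) (hX : X.Nonempty) :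
    sInf ((fun t => f t + 2) '' X) = sInf (f '' X) + 2 := by
  have h1 : (fun t => f t + 2) '' X = (· + 2) '' (f '' X) := by
    rw [Set.image_image]
  rw [h1]
  have hne : (f '' X).Nonempty := hX.image f
  apply le_antisymm
  · exact Nat.sInf_le ⟨sInf (f '' X), Nat.sInf_mem hne, rfl⟩
  · apply le_csInf (hne.image _)
    rintro b ⟨a, ha, rfl⟩
    exact Nat.add_le_add_right (Nat.sInf_le ha) 2

private lemma even_add_two_iff (n : ℕ) : Even (n + 2) ↔ Even n := by
  simp [Nat.even_add]

private lemma sInf_tweak_mem {T : Type*} [DecidableEq T] (f : T → ℕ) (t1 : T) (b : ℕ)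
    (hb : b ≤ 1) (X : Set T) (ht : t1 ∈ X) :
    sInf ((fun t => if t = t1 then b else f t + 2) '' X) = b := by
  apply le_antisymm
  · exact Nat.sInf_le ⟨t1, ht, by simp⟩
  · apply le_csInf (Set.Nonempty.image _ ⟨t1, ht⟩)
    rintro n ⟨a, ha, rfl⟩
    by_cases h : a = t1 <;> simp only [h, if_true, if_false] <;> omega

private lemma sInf_tweak_notmem {T : Type*} [DecidableEq T] (f : T → ℕ) (t1 : T) (b : ℕ)
    (X : Set T) (hX : X.Nonempty) (ht : t1 ∉ X) :
    sInf ((fun t => if t = t1 then b else f t + 2) '' X) = sInf (f '' X) + 2 := by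
  have : (fun t => if t = t1 then b else f t + 2) '' X = (fun t => f t + 2) '' X := by
    apply Set.image_congr
    intro a ha
    have : a ≠ t1 := fun h => ht (h ▸ ha)
    simp [this]
  rw [this, sInf_image_add2 f X hX]

private lemma num_tweak {T : Type*} [Fintype T] [DecidableEq T] (f : T → ℕ) (t1 : T) (b : ℕ) :
    numPriorities (fun t => if t = t1 then b else f t + 2) ≤ numPriorities f + 1 := by
  unfold numPriorities
  have hsub : Set.range (fun t => if t = t1 then b else f t + 2) ⊆
      insert b ((· + 2) '' Set.range f) := by
    rintro n ⟨a, rfl⟩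
    by_cases h : a = t1
    · simp [h]
    · exact Set.mem_insert_iff.mpr (Or.inr ⟨f a, ⟨a, rfl⟩, by simp [h]⟩)
  calc (Set.range _).ncard ≤ (insert b ((· + 2) '' Set.range f)).ncard :=
        Set.ncard_le_ncard hsub (((Set.finite_range f).image _).insert b)
    _ ≤ ((· + 2) '' Set.range f).ncard + 1 := Set.ncard_insert_le _ _
    _ = (Set.range f).ncard + 1 := by
        rw [Set.ncard_image_of_injective _ (add_left_injective 2)]

/-- If every member of `H` has a different `sInf` than `univ`, then some element avoids
all members of `H`. -/
private lemma exists_avoider {T : Type*} [Nonempty T] (H : Set (Set T)) (f : T → ℕ)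
    (h : ∀ X ∈ H, sInf (f '' X) ≠ sInf (f '' Set.univ)) :
    ∃ t1 : T, ∀ X ∈ H, t1 ∉ X := by
  by_contra hc
  push_neg at hc
  have huniv : (f '' (Set.univ : Set T)).Nonempty :=
    (Set.univ_nonempty).image f
  obtain ⟨t, -, hm⟩ := Nat.sInf_mem huniv
  obtain ⟨X, hX, htX⟩ := hc t
  apply h X hX
  apply le_antisymm
  · exact hm ▸ Nat.sInf_le ⟨t, htX, rfl⟩
  · apply le_csInf (Set.Nonempty.image f ⟨t, htX⟩)
    rintro n ⟨a, -, rfl⟩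
    exact Nat.sInf_le ⟨a, Set.mem_univ a, rfl⟩

/-- Handling partial conditions which do not classify `T`.  Let
`(H0, H1)` be a consistent partial condition over a nonempty finite set `T`
with all members nonempty and `T ∉ H0 ∪ H1`, and let `H^p = (H0 ∪ {T}, H1)`
and `H^n = (H0, H1 ∪ {T})`.  (i) If no parity condition is consistent with
`H^p` and none with `H^n`, then none is consistent with `(H0, H1)`.
(ii) If `κp` is consistent with `H^p` with minimally many distinct priorities
and `κn` likewise for `H^n`, then their numbers of distinct priorities differ
by at most 1, and the one with fewer distinct priorities is consistent with
`(H0, H1)` and uses the minimal number of distinct priorities among all parity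
conditions consistent with `(H0, H1)`. -/
theorem parityCons_unclassified_total {T : Type*} [Fintype T] [Nonempty T]
    (H0 H1 : Set (Set T)) (hcons : H0 ∩ H1 = ∅)
    (hne : ∀ X ∈ H0 ∪ H1, X.Nonempty)
    (hT : Set.univ ∉ H0 ∪ H1) :
    ((¬∃ κ : T → ℕ, ParityConsistentWith (H0 ∪ {Set.univ}) H1 κ) →
      (¬∃ κ : T → ℕ, ParityConsistentWith H0 (H1 ∪ {Set.univ}) κ) →
      ¬∃ κ : T → ℕ, ParityConsistentWith H0 H1 κ) ∧
    (∀ κp κn : T → ℕ,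
      ParityConsistentWith (H0 ∪ {Set.univ}) H1 κp →
      (∀ κ' : T → ℕ, ParityConsistentWith (H0 ∪ {Set.univ}) H1 κ' →
        numPriorities κp ≤ numPriorities κ') →
      ParityConsistentWith H0 (H1 ∪ {Set.univ}) κn →
      (∀ κ' : T → ℕ, ParityConsistentWith H0 (H1 ∪ {Set.univ}) κ' →
        numPriorities κn ≤ numPriorities κ') →
      (numPriorities κp ≤ numPriorities κn + 1 ∧
        numPriorities κn ≤ numPriorities κp + 1 ∧
        (numPriorities κp ≤ numPriorities κn →
          ParityConsistentWith H0 H1 κp ∧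
          ∀ κ' : T → ℕ, ParityConsistentWith H0 H1 κ' →
            numPriorities κp ≤ numPriorities κ') ∧
        (numPriorities κn ≤ numPriorities κp →
          ParityConsistentWith H0 H1 κn ∧
          ∀ κ' : T → ℕ, ParityConsistentWith H0 H1 κ' →
            numPriorities κn ≤ numPriorities κ'))) := by
  classical
  -- Any condition consistent with `(H0, H1)` is consistent with `H^p` or `H^n`.
  have hsplit : ∀ κ : T → ℕ, ParityConsistentWith H0 H1 κ →
      ParityConsistentWith (H0 ∪ {Set.univ}) H1 κ ∨
      ParityConsistentWith H0 (H1 ∪ {Set.univ}) κ := by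
    intro κ hκ
    by_cases he : Even (sInf (κ '' Set.univ))
    · left
      refine ⟨?_, hκ.2⟩
      rintro X (hX | hX)
      · exact hκ.1 X hX
      · rw [Set.mem_singleton_iff] at hX
        exact hX ▸ he
    · right
      refine ⟨hκ.1, ?_⟩
      rintro X (hX | hX)
      · exact hκ.2 X hX
      · rw [Set.mem_singleton_iff] at hX
        exact hX ▸ he
  constructor
  · rintro hp hn ⟨κ, hκ⟩
    rcases hsplit κ hκ with h | h
    · exact hp ⟨κ, h⟩
    · exact hn ⟨κ, h⟩
  · intro κp κn hκp hminp hκn hminn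
    have hκpH : ParityConsistentWith H0 H1 κp :=
      ⟨fun X hX => hκp.1 X (Or.inl hX), hκp.2⟩
    have hκnH : ParityConsistentWith H0 H1 κn :=
      ⟨hκn.1, fun X hX => hκn.2 X (Or.inl hX)⟩
    have hup : Even (sInf (κp '' Set.univ)) := hκp.1 _ (Or.inr rfl)
    have hun : ¬Even (sInf (κn '' Set.univ)) := hκn.2 _ (Or.inr rfl)
    -- some element avoids all of H1 (via κp), some element avoids all of H0 (via κn)
    obtain ⟨t1, ht1⟩ : ∃ t1 : T, ∀ X ∈ H1, t1 ∉ X :=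
      exists_avoider H1 κp (fun X hX heq => hκp.2 X hX (heq ▸ hup))
    obtain ⟨t0, ht0⟩ : ∃ t0 : T, ∀ X ∈ H0, t0 ∉ X :=
      exists_avoider H0 κn (fun X hX heq => hun (heq ▸ hκn.1 X hX))
    -- κ'p : consistent with H^p, built from κn, with ≤ numPriorities κn + 1 priorities
    have hbound_p : numPriorities κp ≤ numPriorities κn + 1 := by
      set κ' : T → ℕ := fun t => if t = t1 then 0 else κn t + 2 with hκ'def
      have hc : ParityConsistentWith (H0 ∪ {Set.univ}) H1 κ' := by
        constructor
        · rintro X (hX | hX)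
          · by_cases ht : t1 ∈ X
            · rw [sInf_tweak_mem κn t1 0 (by norm_num) X ht]; exact Even.zero
            · rw [sInf_tweak_notmem κn t1 0 X (hne X (Or.inl hX)) ht,
                even_add_two_iff]
              exact hκn.1 X hX
          · rw [Set.mem_singleton_iff] at hX
            subst hX
            rw [sInf_tweak_mem κn t1 0 (by norm_num) _ (Set.mem_univ t1)]
            exact Even.zero
        · intro X hX
          rw [sInf_tweak_notmem κn t1 0 X (hne X (Or.inr hX)) (ht1 X hX),
            even_add_two_iff]
          exact hκnH.2 X hX
      exact (hminp κ' hc).trans (num_tweak κn t1 0)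
    -- κ'n : consistent with H^n, built from κp, with ≤ numPriorities κp + 1 priorities
    have hbound_n : numPriorities κn ≤ numPriorities κp + 1 := by
      set κ' : T → ℕ := fun t => if t = t0 then 1 else κp t + 2 with hκ'def
      have hc : ParityConsistentWith H0 (H1 ∪ {Set.univ}) κ' := by
        constructor
        · intro X hX
          rw [sInf_tweak_notmem κp t0 1 X (hne X (Or.inl hX)) (ht0 X hX),
            even_add_two_iff]
          exact hκpH.1 X hX
        · rintro X (hX | hX)
          · by_cases ht : t0 ∈ X
            · rw [sInf_tweak_mem κp t0 1 le_rfl X ht]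
              exact Nat.not_even_one
            · rw [sInf_tweak_notmem κp t0 1 X (hne X (Or.inr hX)) ht,
                even_add_two_iff]
              exact hκpH.2 X hX
          · rw [Set.mem_singleton_iff] at hX
            subst hX
            rw [sInf_tweak_mem κp t0 1 le_rfl _ (Set.mem_univ t0)]
            exact Nat.not_even_one
      exact (hminn κ' hc).trans (num_tweak κp t0 1)
    refine ⟨hbound_p, hbound_n, ?_, ?_⟩
    · intro hle
      refine ⟨hκpH, fun κ' hκ' => ?_⟩
      rcases hsplit κ' hκ' with h | h
      · exact hminp κ' h
      · exact hle.trans (hminn κ' h)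
    · intro hle
      refine ⟨hκnH, fun κ' hκ' => ?_⟩
      rcases hsplit κ' hκ' with h | h
      · exact hle.trans (hminp κ' h)
      · exact hminn κ' h
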